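/- Let X = {x_1, ..., x_m} be a set of nonempty binary strings, and let the directed edge-periodic cycle be constructed as in the reduction (vertices v_0, ..., v_m, s; τ((v_m, s)) = 0^m 1 0^(m+1); τ((s, v_0)) = 0^(2m+1) 1; τ((v_{j−1}, v_j)) the block encoding of x_j with blocks ξ(c) = c^m 0 1^(m+1) of length q = 2m+2). If for every position t there exists some x ∈ X with x[t mod |x|] = 0, then the robber has a strategy evading the cop forever; hence the cycle is robber-winning. -/

import Mathlib

namespace EPD

/-- The directed edge from vertex `e` to vertex `e+1` of the cycle is present at time `t`
iff its string `τ e` has a `1` at position `t mod |τ e|`. -/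
def present {n : ℕ} (τ : Fin n → List Bool) (e : Fin n) (t : ℕ) : Prop :=
  (τ e).getD (t % (τ e).length) false = true

/-- A legal move on the directed edge-periodic cycle at time `t`: stay, or cross to the
(forward) neighbour along a directed edge present at time `t`. -/
def moveOK {n : ℕ} (τ : Fin n → List Bool) (t : ℕ) (u v : Fin n) : Prop :=
  v = u ∨ (v.val = (u.val + 1) % n ∧ present τ u t)

/-- A strategy: given the time and both current positions, produce the mover's next
vertex. -/
abbrev Strat (n : ℕ) := ℕ → Fin n → Fin n → Fin n

def copValid {n : ℕ} (τ : Fin n → List Bool) (σ : Strat n) : Prop :=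
  ∀ t u r, moveOK τ t u (σ t u r)

def robValid {n : ℕ} (τ : Fin n → List Bool) (σ : Strat n) : Prop :=
  ∀ t c r, moveOK τ t r (σ t c r)

/-- Positions (cop, robber) at the beginning of round `t`; each round the cop moves
first, then the robber (seeing the cop's new position). -/
def pos {n : ℕ} (σc σr : Strat n) (c0 r0 : Fin n) : ℕ → Fin n × Fin n
  | 0 => (c0, r0)
  | t + 1 =>
      let p := pos σc σr c0 r0 t
      let c' := σc t p.1 p.2
      (c', σr t c' p.2)

/-- The cop eventually catches the robber: either the robber starts on the cop's vertex,
or some cop move lands on the robber's current vertex. -/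
def caught {n : ℕ} (σc σr : Strat n) (c0 r0 : Fin n) : Prop :=
  c0 = r0 ∨ ∃ t,
    σc t (pos σc σr c0 r0 t).1 (pos σc σr c0 r0 t).2 = (pos σc σr c0 r0 t).2

def copWinning {n : ℕ} (τ : Fin n → List Bool) : Prop :=
  ∃ c0 σc, copValid τ σc ∧ ∀ r0 σr, robValid τ σr → caught σc σr c0 r0

def robberWinning {n : ℕ} (τ : Fin n → List Bool) : Prop :=
  ∀ c0 σc, copValid τ σc → ∃ r0 σr, robValid τ σr ∧ ¬ caught σc σr c0 r0

/-- The gadget block `ξ(c) = c^m 0 1^(m+1)` of length `q = 2m+2`. -/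
def xiBlock (m : ℕ) (c : Bool) : List Bool :=
  List.replicate m c ++ [false] ++ List.replicate (m + 1) true

/-- The block encoding `ξ(x[0]) ⋯ ξ(x[|x|-1])` of a binary string `x`. -/
def encode (m : ℕ) (x : List Bool) : List Bool := (x.map (xiBlock m)).flatten

/-- The edge strings of the directed edge-periodic cycle of the reduction, on vertices
`v_0, ..., v_m, s` (vertex `s` is `⟨m+1⟩`): edge `(v_j, v_{j+1})` (for `j < m`) carries
the block encoding of `x_{j+1}`; edge `(v_m, s)` carries `0^m 1 0^(m+1)`;
edge `(s, v_0)` carries `0^(2m+1) 1`. Edges are indexed by their source vertex. -/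
def tauRed (m : ℕ) (x : Fin m → List Bool) : Fin (m + 2) → List Bool := fun e =>
  if h : e.val < m then encode m (x ⟨e.val, h⟩)
  else if e.val = m then
    List.replicate m false ++ [true] ++ List.replicate (m + 1) false
  else List.replicate (2 * m + 1) false ++ [true]

end EPD

/-! Time splits into periods of length `q = 2m+2`. The edges `(v_m, s)` and `(s, v_0)` open only
at offsets `m` and `2m+1`, every edge of the path `v_0 → v_m` is open at offsets `m+1, …, 2m+1`,
and at offsets `0, …, m-1` the edge `(v_{j-1}, v_j)` is open only if `x_j` has a `1` at the
current period. Some `x_j` has a `0` there, so a cop entering the path at `v_0` at the start of a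
period stays behind `v_j` until offset `m`, when the robber leaves `v_m` for `s`; a cop crossing to
`s` at offset `m` leaves the path free, and the robber walks from `v_0` to `v_m` before the cop can
come back at offset `2m+1`. So the robber always sits on a vertex safe for the cop's: `v_0` for
`v_1, …, v_m`, `v_m` for `v_0` and `s`, and `s` for `v_0`. -/

theorem Nat.add_one_mod_div_cases {q : ℕ} (t : ℕ) (hq : 0 < q) :
    t % q + 1 < q ∧ (t + 1) % q = t % q + 1 ∧ (t + 1) / q = t / q ∨
      t % q + 1 = q ∧ (t + 1) % q = 0 := by
  have hlt := Nat.mod_lt t hq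
  have hmod : (t + 1) % q = (t % q + 1) % q := (Nat.mod_add_mod t q 1).symm
  rcases Nat.lt_or_ge (t % q + 1) q with h | h
  · refine Or.inl ⟨h, by rw [hmod, Nat.mod_eq_of_lt h], Nat.succ_div_of_not_dvd ?_⟩
    rw [Nat.dvd_iff_mod_eq_zero, hmod, Nat.mod_eq_of_lt h]
    omega
  · have h' : t % q + 1 = q := by omega
    exact Or.inr ⟨h', by rw [hmod, h', Nat.mod_self]⟩

namespace EPD

section Strings

variable (m : ℕ)

lemma length_xiBlock (c : Bool) : (xiBlock m c).length = 2 * m + 2 := by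
  simp only [xiBlock, List.length_append, List.length_replicate, List.length_singleton]
  omega

lemma getD_xiBlock (c : Bool) {o : ℕ} (ho : o < 2 * m + 2) :
    (xiBlock m c).getD o false = if o < m then c else if o = m then false else true := by
  simp only [xiBlock, List.getD_eq_getElem?_getD, List.getElem?_append, List.getElem?_replicate,
    List.length_append, List.length_replicate, List.length_singleton, List.getElem?_singleton]
  split_ifs <;> first | omega | simp_all

lemma length_encode (w : List Bool) : (encode m w).length = (2 * m + 2) * w.length := by
  simp [encode, Function.comp_def, length_xiBlock, mul_comm]

lemma getD_encode {w : List Bool} {b o : ℕ} (hb : b < w.length) (ho : o < 2 * m + 2) :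
    (encode m w).getD ((2 * m + 2) * b + o) false = (xiBlock m (w.getD b false)).getD o false := by
  induction w generalizing b with
  | nil => simp at hb
  | cons a w ih =>
    have hcons : encode m (a :: w) = xiBlock m a ++ encode m w := rfl
    rcases b with _ | b
    · rw [hcons, List.getD_append _ _ _ _ (by rw [length_xiBlock]; omega)]
      simp
    · rw [hcons, List.getD_append_right _ _ _ _ (by rw [length_xiBlock]; nlinarith),
        length_xiBlock, show (2 * m + 2) * (b + 1) + o - (2 * m + 2) = (2 * m + 2) * b + o by
          rw [Nat.mul_succ]; omega, ih (by simpa using hb)]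
      simp

end Strings

section Presence

variable {m : ℕ} {x : Fin m → List Bool} {e : Fin (m + 2)} {t : ℕ}

lemma present_tauRed_of_lt (hne : ∀ j, x j ≠ []) (j : Fin m) (he : e.val = j.val) :
    present (tauRed m x) e t ↔ m + 1 ≤ t % (2 * m + 2) ∨
      t % (2 * m + 2) < m ∧ (x j).getD (t / (2 * m + 2) % (x j).length) false = true := by
  have hτ : tauRed m x e = encode m (x j) := by simp [tauRed, he]
  have hL : 0 < (x j).length := List.length_pos_iff.2 (hne j)
  have ho : t % (2 * m + 2) < 2 * m + 2 := Nat.mod_lt _ (by omega)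
  rw [present, hτ, length_encode, Nat.mod_mul, add_comm,
    getD_encode m (Nat.mod_lt _ hL) ho, getD_xiBlock m _ ho]
  split_ifs <;> simp_all <;> omega

lemma present_tauRed_of_eq (he : e.val = m) :
    present (tauRed m x) e t ↔ t % (2 * m + 2) = m := by
  have hτ : tauRed m x e = List.replicate m false ++ [true] ++ List.replicate (m + 1) false := by
    rw [tauRed, dif_neg (by omega), if_pos he]
  have ho : t % (2 * m + 2) < 2 * m + 2 := Nat.mod_lt _ (by omega)
  simp only [present, hτ, List.getD_eq_getElem?_getD, List.getElem?_append,
    List.getElem?_replicate, List.length_append, List.length_replicate, List.length_singleton,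
    List.getElem?_singleton, show m + 1 + (m + 1) = 2 * m + 2 by ring]
  split_ifs <;> simp_all <;> omega

lemma present_tauRed_of_eq_succ (he : e.val = m + 1) :
    present (tauRed m x) e t ↔ t % (2 * m + 2) = 2 * m + 1 := by
  have hτ : tauRed m x e = List.replicate (2 * m + 1) false ++ [true] := by
    rw [tauRed, dif_neg (by omega), if_neg (by omega)]
  have ho : t % (2 * m + 2) < 2 * m + 2 := Nat.mod_lt _ (by omega)
  simp only [present, hτ, List.getD_eq_getElem?_getD, List.getElem?_append,
    List.getElem?_replicate, List.length_append, List.length_replicate, List.length_singleton,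
    List.getElem?_singleton, show 2 * m + 1 + 1 = 2 * m + 2 by ring]
  split_ifs <;> simp_all <;> omega

end Presence

section Moves

variable {m : ℕ} {x : Fin m → List Bool} {t : ℕ} {c c' : Fin (m + 2)}

lemma val_of_moveOK_tauRed (h : moveOK (tauRed m x) t c c') :
    c'.val = c.val ∨ c.val < m ∧ c'.val = c.val + 1 ∨
      c.val = m ∧ c'.val = m + 1 ∧ t % (2 * m + 2) = m ∨
      c.val = m + 1 ∧ c'.val = 0 ∧ t % (2 * m + 2) = 2 * m + 1 := by
  rcases h with rfl | ⟨hv, hp⟩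
  · exact Or.inl rfl
  rcases Nat.lt_or_ge c.val m with hc | hc
  · exact Or.inr (Or.inl ⟨hc, by rw [hv, Nat.mod_eq_of_lt (by omega)]⟩)
  rcases Nat.eq_or_lt_of_le hc with hc | hc
  · exact Or.inr (Or.inr (Or.inl ⟨hc.symm, by rw [hv, ← hc, Nat.mod_eq_of_lt (by omega)],
      (present_tauRed_of_eq hc.symm).1 hp⟩))
  · have hc : c.val = m + 1 := by omega
    exact Or.inr (Or.inr (Or.inr ⟨hc, by rw [hv, hc, Nat.mod_self],
      (present_tauRed_of_eq_succ hc).1 hp⟩))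

lemma val_le_of_moveOK_tauRed_of_getD_eq_false (hne : ∀ j, x j ≠ []) (j : Fin m)
    (hc : c.val ≤ j.val) (ho : t % (2 * m + 2) ≤ m)
    (hj : (x j).getD (t / (2 * m + 2) % (x j).length) false = false)
    (h : moveOK (tauRed m x) t c c') : c'.val ≤ j.val := by
  rcases val_of_moveOK_tauRed h with h' | ⟨-, h'⟩ | ⟨hcm, -⟩ | ⟨hcm, -⟩
  · omega
  · rcases Nat.lt_or_ge c.val j.val with hlt | hge
    · omega
    rcases h with rfl | ⟨-, hp⟩
    · exact hc
    rcases (present_tauRed_of_lt hne j (by omega)).1 hp with ho' | ⟨-, hj'⟩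
    · omega
    · exact absurd (hj.symm.trans hj') Bool.false_ne_true
  all_goals have := j.2; omega

end Moves

section Robber

def RobberAdvances (m t : ℕ) (c r : Fin (m + 2)) : Prop :=
  r.val < m ∧ c.val = m + 1 ∧ m + 1 ≤ t % (2 * m + 2) ∨
    r.val = m ∧ c.val ≠ m + 1 ∧ t % (2 * m + 2) = m ∨
    r.val = m + 1 ∧ c.val ≠ 0 ∧ t % (2 * m + 2) = 2 * m + 1

instance (m t : ℕ) (c r : Fin (m + 2)) : Decidable (RobberAdvances m t c r) := by
  unfold RobberAdvances; infer_instance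

def robberStrat (m : ℕ) : Strat (m + 2) := fun t c r =>
  if RobberAdvances m t c r then ⟨(r.val + 1) % (m + 2), Nat.mod_lt _ (by omega)⟩ else r

lemma robberStrat_valid {m : ℕ} {x : Fin m → List Bool} (hne : ∀ j, x j ≠ []) :
    robValid (tauRed m x) (robberStrat m) := by
  intro t c r
  unfold robberStrat
  split_ifs with hadv
  · refine Or.inr ⟨rfl, ?_⟩
    rcases hadv with ⟨hr, -, ho⟩ | ⟨hr, -, ho⟩ | ⟨hr, -, ho⟩
    · exact (present_tauRed_of_lt hne ⟨r.val, hr⟩ rfl).2 (Or.inl ho)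
    · exact (present_tauRed_of_eq hr).2 ho
    · exact (present_tauRed_of_eq_succ hr).2 ho
  · exact Or.inl rfl

lemma val_robberStrat (m t : ℕ) (c r : Fin (m + 2)) :
    RobberAdvances m t c r ∧ r.val ≤ m ∧ (robberStrat m t c r).val = r.val + 1 ∨
      RobberAdvances m t c r ∧ r.val = m + 1 ∧ (robberStrat m t c r).val = 0 ∨
      ¬ RobberAdvances m t c r ∧ (robberStrat m t c r).val = r.val := by
  unfold robberStrat
  split_ifs with hadv
  · rcases Nat.lt_or_ge r.val (m + 1) with hr | hr
    · exact Or.inl ⟨hadv, by omega, Nat.mod_eq_of_lt (by omega)⟩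
    · have hr : r.val = m + 1 := by omega
      exact Or.inr (Or.inl ⟨hadv, hr, by simp [hr]⟩)
  · exact Or.inr (Or.inr ⟨hadv, rfl⟩)

end Robber

/-- Positions at the start of round `t` from which the robber survives the round. -/
inductive Safe (m : ℕ) (x : Fin m → List Bool) (t : ℕ) (c r : Fin (m + 2)) : Prop
  | robberAtV0 : r.val = 0 → 1 ≤ c.val → c.val ≤ m → Safe m x t c r
  /-- The cop crossed to `s` at offset `m`; the robber walks to `v_m` while `s` is closed. -/
  | run : c.val = m + 1 → r.val + (m + 1) = t % (2 * m + 2) → Safe m x t c r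
  | copAtS : c.val = m + 1 → r.val = m → Safe m x t c r
  /-- `x_j` has a `0` at the current period, so the edge `(v_j, v_{j+1})` stays closed
  during the first half of the period. -/
  | copBlocked (j : Fin m) : m ≤ r.val → t % (2 * m + 2) ≤ m → c.val ≤ j.val →
      (x j).getD (t / (2 * m + 2) % (x j).length) false = false → Safe m x t c r
  | robberAtS : r.val = m + 1 → m + 1 ≤ t % (2 * m + 2) → c.val ≤ m → Safe m x t c r

namespace Safe

variable {m : ℕ} {x : Fin m → List Bool} {t : ℕ} {c r : Fin (m + 2)}

lemma ne (h : Safe m x t c r) : c ≠ r := by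
  refine Fin.ne_of_val_ne ?_
  have := Nat.mod_lt t (show 0 < 2 * m + 2 by omega)
  cases h with
  | copBlocked j => have := j.2; omega
  | _ => omega

lemma step (hm : 1 ≤ m) (hne : ∀ j, x j ≠ [])
    (hno : ∀ t : ℕ, ∃ j, (x j).getD (t % (x j).length) false = false)
    (h : Safe m x t c r) {c' : Fin (m + 2)} (hmove : moveOK (tauRed m x) t c c') :
    c' ≠ r ∧ Safe m x (t + 1) c' (robberStrat m t c' r) := by
  have hcop := val_of_moveOK_tauRed hmove
  have hrob := val_robberStrat m t c' r
  unfold RobberAdvances at hrob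
  have ho := Nat.mod_lt t (show 0 < 2 * m + 2 by omega)
  have hnext := Nat.add_one_mod_div_cases t (show 0 < 2 * m + 2 by omega)
  obtain ⟨k, hk⟩ := hno ((t + 1) / (2 * m + 2))
  cases h with
  | robberAtV0 hr hc1 hc2 =>
    refine ⟨Fin.ne_of_val_ne (by omega), ?_⟩
    by_cases hc' : c'.val = m + 1
    · exact .run hc' (by omega)
    · exact .robberAtV0 (by omega) (by omega) (by omega)
  | run hc hr =>
    refine ⟨Fin.ne_of_val_ne (by omega), ?_⟩
    by_cases hc' : c'.val = 0
    · exact .copBlocked k (by omega) (by omega) (by omega) hk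
    by_cases ho' : t % (2 * m + 2) = 2 * m + 1
    · exact .copAtS (by omega) (by omega)
    · exact .run (by omega) (by omega)
  | copAtS hc hr =>
    refine ⟨Fin.ne_of_val_ne (by omega), ?_⟩
    by_cases hc' : c'.val = 0
    · exact .copBlocked k (by omega) (by omega) (by omega) hk
    · exact .copAtS (by omega) (by omega)
  | copBlocked j hr ho hc hj =>
    have hc' := val_le_of_moveOK_tauRed_of_getD_eq_false hne j hc ho hj hmove
    have hj' := j.2
    refine ⟨Fin.ne_of_val_ne (by omega), ?_⟩
    by_cases ho' : t % (2 * m + 2) = m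
    · exact .robberAtS (by omega) (by omega) (by omega)
    · obtain ⟨-, -, hdiv⟩ := hnext.resolve_right (by omega)
      exact .copBlocked j (by omega) (by omega) hc' (hdiv ▸ hj)
  | robberAtS hr ho hc =>
    refine ⟨Fin.ne_of_val_ne (by omega), ?_⟩
    by_cases ho' : t % (2 * m + 2) = 2 * m + 1
    · by_cases hc' : c'.val = 0
      · exact .copBlocked k (by omega) (by omega) (by omega) hk
      · exact .robberAtV0 (by omega) (by omega) (by omega)
    · exact .robberAtS (by omega) (by omega) (by omega)

end Safe

def robberStart (m : ℕ) (c : Fin (m + 2)) : Fin (m + 2) :=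
  if 1 ≤ c.val ∧ c.val ≤ m then ⟨0, by omega⟩ else ⟨m, by omega⟩

lemma safe_robberStart {m : ℕ} {x : Fin m → List Bool}
    (hno : ∀ t : ℕ, ∃ j, (x j).getD (t % (x j).length) false = false) (c : Fin (m + 2)) :
    Safe m x 0 c (robberStart m c) := by
  unfold robberStart
  split_ifs with hc
  · exact .robberAtV0 rfl hc.1 hc.2
  · obtain ⟨j, hj⟩ := hno 0
    by_cases hc0 : c.val = 0
    · exact .copBlocked j le_rfl (by simp) (by omega) (by simpa using hj)
    · exact .copAtS (by omega) rfl

end EPD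

open EPD in
/-- Backward direction of the reduction: if every position `t` has some `x ∈ X` with
`x[t mod |x|] = 0`, then in the directed edge-periodic cycle of the reduction the robber
can evade the cop forever; hence the cycle is robber-winning. -/
theorem stmt_13 (m : ℕ) (hm : 1 ≤ m) (x : Fin m → List Bool)
    (hne : ∀ j, x j ≠ [])
    (hno : ∀ t : ℕ, ∃ j, (x j).getD (t % (x j).length) false = false) :
    robberWinning (tauRed m x) := by
  intro c0 σc hσc
  refine ⟨robberStart m c0, robberStrat m, robberStrat_valid hne, ?_⟩
  have hsafe : ∀ t, Safe m x t (pos σc (robberStrat m) c0 (robberStart m c0) t).1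
      (pos σc (robberStrat m) c0 (robberStart m c0) t).2 := by
    intro t
    induction t with
    | zero => exact safe_robberStart hno c0
    | succ t ih => exact (ih.step hm hne hno (hσc t _ _)).2
  rintro (h0 | ⟨t, ht⟩)
  · exact (hsafe 0).ne h0
  · exact ((hsafe t).step hm hne hno (hσc t _ _)).1 ht
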